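/- Let g : ℤ → ℝ satisfy g(x) > 0 for all x and suppose lim_{n→∞} (1/n) ∑_{x=0}^{n−1} g(x) = 1. Let F : ℝ → [0,1] be a continuous nondecreasing function. Then for every M > 0, lim_{t→∞} (1/√t) ∑_{0 ≤ x ≤ M√t} g(x)·F(−x/√t) = ∫_0^M F(−s) ds. -/

import Mathlib

/-!
Write `r = √t`, `N = ⌊M r⌋₊ + 1` and `f s = F (-s)`, which is antitone. The sum splits as
`(1/r) ∑_{i<N} (g i - 1) f(i/r) + (1/r) ∑_{i<N} f(i/r)`. The second part is a Riemann sum of a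
monotone function, within `f 0 / r` of `∫_0^{N/r} f`, and `N/r → M`. For the first part, Abel
summation against the antitone weights `f(i/r) ∈ [0, f 0]` bounds it by `f 0 / r` times the largest
partial sum `|∑_{i<k} (g i - 1)|` for `k ≤ N`; the Cesàro hypothesis makes these partial sums
`o(k)`, hence their running maximum `o(N) = o(r)`.
-/

open Finset Filter MeasureTheory intervalIntegral Asymptotics Topology

theorem Finset.sum_Icc_zero_sub_one_eq_sum_range {E : Type*} [AddCommMonoid E] (φ : ℤ → E)
    (n : ℕ) : ∑ x ∈ Icc (0 : ℤ) (n - 1), φ x = ∑ i ∈ range n, φ i := by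
  rw [Icc_sub_one_right_eq_Ico, Int.Ico_eq_finset_map, sum_map]
  simp

/-- Abel's inequality. -/
theorem abs_sum_range_mul_le_of_antitone {c f : ℕ → ℝ} (hf : Antitone f) (hf0 : ∀ i, 0 ≤ f i)
    {n : ℕ} {B : ℝ} (hB : ∀ k ≤ n, |∑ i ∈ range k, c i| ≤ B) :
    |∑ i ∈ range n, c i * f i| ≤ f 0 * B := by
  have hstep : ∀ i ∈ range (n - 1),
      |(f (i + 1) - f i) * ∑ j ∈ range (i + 1), c j| ≤ (f i - f (i + 1)) * B := by
    intro i hi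
    have hdec : 0 ≤ f i - f (i + 1) := sub_nonneg.mpr (hf i.le_succ)
    rw [abs_mul, abs_sub_comm, abs_of_nonneg hdec]
    exact mul_le_mul_of_nonneg_left (hB _ (by grind)) hdec
  have hparts := sum_range_by_parts f c n
  simp only [smul_eq_mul] at hparts
  rw [sum_congr rfl fun i _ ↦ mul_comm (c i) (f i), hparts]
  calc |f (n - 1) * ∑ i ∈ range n, c i
          - ∑ i ∈ range (n - 1), (f (i + 1) - f i) * ∑ j ∈ range (i + 1), c j|
      ≤ |f (n - 1) * ∑ i ∈ range n, c i|
          + ∑ i ∈ range (n - 1), |(f (i + 1) - f i) * ∑ j ∈ range (i + 1), c j| :=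
        (abs_sub _ _).trans (add_le_add_right (abs_sum_le_sum_abs _ _) _)
    _ ≤ f (n - 1) * B + ∑ i ∈ range (n - 1), (f i - f (i + 1)) * B := by
        rw [abs_mul, abs_of_nonneg (hf0 _)]
        exact add_le_add (mul_le_mul_of_nonneg_left (hB n le_rfl) (hf0 _)) (sum_le_sum hstep)
    _ = f 0 * B := by rw [← sum_mul, sum_range_sub' f]; ring

theorem Asymptotics.IsLittleO.partialSups_abs {u : ℕ → ℝ}
    (hu : u =o[atTop] fun n ↦ (n : ℝ)) :
    partialSups (fun k ↦ |u k|) =o[atTop] fun n ↦ (n : ℝ) := by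
  refine IsLittleO.of_bound fun ε hε ↦ ?_
  obtain ⟨K, hK⟩ := eventually_atTop.mp (hu.bound hε)
  set P := partialSups (fun k ↦ |u k|)
  filter_upwards [eventually_ge_atTop K,
    tendsto_natCast_atTop_atTop.eventually_ge_atTop (P K / ε)] with n hKn hn
  have hP0 : 0 ≤ P n := (abs_nonneg (u 0)).trans (le_partialSups_of_le (fun k ↦ |u k|) n.zero_le)
  rw [Real.norm_of_nonneg hP0, Real.norm_natCast]
  refine partialSups_le _ _ _ fun k hkn ↦ ?_
  rcases le_total k K with hkK | hKk
  · calc |u k| ≤ P K := le_partialSups_of_le (fun k ↦ |u k|) hkK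
      _ ≤ ε * n := by rwa [div_le_iff₀' hε] at hn
  · calc |u k| ≤ ε * k := by simpa using hK k hKk
      _ ≤ ε * n := by gcongr

theorem isLittleO_sum_range_sub_of_tendsto_div {a : ℕ → ℝ} {L : ℝ}
    (h : Tendsto (fun n : ℕ ↦ (∑ i ∈ range n, a i) / n) atTop (𝓝 L)) :
    (fun n ↦ ∑ i ∈ range n, (a i - L)) =o[atTop] fun n ↦ (n : ℝ) := by
  rw [isLittleO_iff_tendsto' (.of_forall fun n hn ↦ by simp_all)]
  have h' : Tendsto (fun n : ℕ ↦ (∑ i ∈ range n, a i) / n - L) atTop (𝓝 0) := by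
    simpa using h.sub_const L
  refine h'.congr' ?_
  filter_upwards [eventually_ne_atTop 0] with n hn
  rw [sum_sub_distrib, sum_const, card_range, nsmul_eq_mul]
  field_simp

section Antitone

variable {f : ℝ → ℝ}

theorem Antitone.integral_le_sum_div {r : ℝ} (hf : Antitone f) (hr : 0 < r) (n : ℕ) :
    ∫ s in 0..n / r, f s ≤ (∑ i ∈ range n, f (i / r)) / r := by
  have hfr : Antitone fun x ↦ f (x / r) := fun x y hxy ↦ hf (div_le_div_of_nonneg_right hxy hr.le)
  have := (hfr.antitoneOn (Set.Icc 0 (0 + n))).integral_le_sum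
  rw [le_div_iff₀ hr, mul_comm]
  simpa [hr.ne'] using this

theorem Antitone.sum_div_le_integral_add {r : ℝ} (hf : Antitone f) (hr : 0 < r) (n : ℕ) :
    (∑ i ∈ range n, f (i / r)) / r ≤ (∫ s in 0..n / r, f s) + (f 0 - f (n / r)) / r := by
  have hfr : Antitone fun x ↦ f (x / r) := fun x y hxy ↦ hf (div_le_div_of_nonneg_right hxy hr.le)
  have hsum := (hfr.antitoneOn (Set.Icc 0 (0 + n))).sum_le_integral
  have hshift := (sum_range_succ' (fun i : ℕ ↦ f (i / r)) n).symm.trans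
    (sum_range_succ (fun i : ℕ ↦ f (i / r)) n)
  simp only [zero_add, integral_comp_div _ hr.ne', smul_eq_mul, zero_div] at hsum
  push_cast [zero_div] at hshift hsum
  rw [div_le_iff₀ hr, add_mul, div_mul_cancel₀ _ hr.ne']
  linarith

theorem Antitone.tendsto_sum_div_integral (hf : Antitone f) (hf0 : ∀ s, 0 ≤ f s) {N : ℝ → ℕ}
    {M : ℝ} (hN : Tendsto (fun r ↦ (N r : ℝ) / r) atTop (𝓝 M)) :
    Tendsto (fun r ↦ (∑ i ∈ range (N r), f (i / r)) / r) atTop (𝓝 (∫ s in 0..M, f s)) := by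
  have hI : Tendsto (fun r ↦ ∫ s in 0..N r / r, f s) atTop (𝓝 (∫ s in 0..M, f s)) :=
    ((continuous_primitive (fun _ _ ↦ hf.intervalIntegrable) 0).tendsto M).comp hN
  have hI' : Tendsto (fun r ↦ (∫ s in 0..N r / r, f s) + f 0 / r) atTop
      (𝓝 (∫ s in 0..M, f s)) := by
    simpa using hI.add (tendsto_const_nhds.div_atTop tendsto_id)
  refine tendsto_of_tendsto_of_tendsto_of_le_of_le' hI hI' ?_ ?_ <;>
    filter_upwards [eventually_gt_atTop 0] with r hr
  · exact hf.integral_le_sum_div hr _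
  · refine (hf.sum_div_le_integral_add hr _).trans ?_
    gcongr
    exact sub_le_self _ (hf0 _)

theorem tendsto_sum_mul_div_of_isLittleO {c : ℕ → ℝ}
    (hc : (fun n ↦ ∑ i ∈ range n, c i) =o[atTop] fun n ↦ (n : ℝ))
    (hf : Antitone f) (hf0 : ∀ s, 0 ≤ f s) {N : ℝ → ℕ} {M : ℝ} (hM : 0 < M)
    (hN : Tendsto (fun r ↦ (N r : ℝ) / r) atTop (𝓝 M)) :
    Tendsto (fun r ↦ (∑ i ∈ range (N r), c i * f (i / r)) / r) atTop (𝓝 0) := by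
  set P := partialSups fun k ↦ |∑ i ∈ range k, c i|
  have hNtop : Tendsto N atTop atTop := by
    refine tendsto_natCast_atTop_iff.mp ((hN.pos_mul_atTop hM tendsto_id).congr' ?_)
    filter_upwards [eventually_ne_atTop 0] with r hr
    exact div_mul_cancel₀ _ hr
  have hNr : (fun r ↦ (N r : ℝ)) =O[atTop] fun r ↦ r :=
    isBigO_of_div_tendsto_nhds (by filter_upwards [eventually_ne_atTop 0] with r hr h; simp_all)
      M hN
  have hsum : (fun r ↦ ∑ i ∈ range (N r), c i * f (i / r)) =O[atTop] fun r ↦ P (N r) := by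
    refine IsBigO.of_bound (f 0) ?_
    filter_upwards [eventually_gt_atTop 0] with r hr
    have hfr : Antitone fun i : ℕ ↦ f (i / r) := fun i j hij ↦
      hf (div_le_div_of_nonneg_right (Nat.cast_le.mpr hij) hr.le)
    rw [Real.norm_eq_abs, Real.norm_eq_abs]
    have hB : ∀ k ≤ N r, |∑ i ∈ range k, c i| ≤ |P (N r)| := fun k hk ↦
      (le_partialSups_of_le (fun k ↦ |∑ i ∈ range k, c i|) hk).trans (le_abs_self _)
    simpa using abs_sum_range_mul_le_of_antitone hfr (fun _ ↦ hf0 _) hB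
  exact (hsum.trans_isLittleO
    ((hc.partialSups_abs.comp_tendsto hNtop).trans_isBigO hNr)).tendsto_div_nhds_zero

theorem tendsto_natFloor_mul_add_one_div {M : ℝ} (hM : 0 ≤ M) :
    Tendsto (fun r ↦ ((⌊M * r⌋₊ + 1 : ℕ) : ℝ) / r) atTop (𝓝 M) := by
  have := (tendsto_nat_floor_mul_div_atTop hM).add tendsto_inv_atTop_zero
  simpa [add_div] using this

theorem tendsto_weighted_riemann_sum {g : ℤ → ℝ}
    (hg : Tendsto (fun n : ℕ ↦ (∑ x ∈ Icc (0 : ℤ) (n - 1), g x) / n) atTop (𝓝 1))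
    (hf : Antitone f) (hf0 : ∀ s, 0 ≤ f s) {M : ℝ} (hM : 0 < M) :
    Tendsto (fun r ↦ (∑ x ∈ Icc (0 : ℤ) ⌊M * r⌋, g x * f (x / r)) / r) atTop
      (𝓝 (∫ s in 0..M, f s)) := by
  simp_rw [sum_Icc_zero_sub_one_eq_sum_range] at hg
  have hN := tendsto_natFloor_mul_add_one_div hM.le
  have hA := tendsto_sum_mul_div_of_isLittleO (isLittleO_sum_range_sub_of_tendsto_div hg)
    hf hf0 hM hN
  have hB := hf.tendsto_sum_div_integral hf0 hN
  have hAB := hA.add hB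
  rw [zero_add] at hAB
  refine hAB.congr' ?_
  filter_upwards [eventually_ge_atTop 0] with r hr
  have hfloor : ⌊M * r⌋ = ((⌊M * r⌋₊ + 1 : ℕ) : ℤ) - 1 := by
    push_cast [Int.natCast_floor_eq_floor (by positivity : 0 ≤ M * r)]; ring
  rw [hfloor, sum_Icc_zero_sub_one_eq_sum_range, ← add_div, ← sum_add_distrib]
  congr 1
  exact sum_congr rfl fun i _ ↦ by push_cast; ring

end Antitone

theorem weighted_riemann_sum_limit_general
    (g : ℤ → ℝ)
    (hgmean : Tendsto (fun n : ℕ => (∑ x ∈ Finset.Icc (0 : ℤ) ((n : ℤ) - 1), g x) / (n : ℝ))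
      atTop (nhds 1))
    (F : ℝ → ℝ) (hFmono : Monotone F)
    (hF01 : ∀ s, 0 ≤ F s ∧ F s ≤ 1) :
    ∀ M : ℝ, 0 < M →
      Tendsto
        (fun t : ℝ =>
          (∑ x ∈ Finset.Icc (0 : ℤ) ⌊M * Real.sqrt t⌋,
              g x * F (-(x : ℝ) / Real.sqrt t)) / Real.sqrt t)
        atTop (nhds (∫ s in (0 : ℝ)..M, F (-s))) := by
  intro M hM
  have hf : Antitone fun s ↦ F (-s) := hFmono.comp_antitone fun _ _ h ↦ neg_le_neg h
  have := (tendsto_weighted_riemann_sum hgmean hf (fun s ↦ (hF01 (-s)).1) hM).comp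
    Real.tendsto_sqrt_atTop
  simpa [Function.comp_def, neg_div] using this

/-- Weighted Riemann-sum convergence: if `g` has Cesàro mean `1` and `F` is a
continuous nondecreasing `[0,1]`-valued function, then
`(1/√t) ∑_{0 ≤ x ≤ M√t} g(x) F(−x/√t) → ∫_0^M F(−s) ds`. -/
theorem weighted_riemann_sum_limit
    (g : ℤ → ℝ) (hgpos : ∀ x : ℤ, 0 < g x)
    (hgmean : Tendsto (fun n : ℕ => (∑ x ∈ Finset.Icc (0 : ℤ) ((n : ℤ) - 1), g x) / (n : ℝ))
      atTop (nhds 1))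
    (F : ℝ → ℝ) (hFcont : Continuous F) (hFmono : Monotone F)
    (hF01 : ∀ s, 0 ≤ F s ∧ F s ≤ 1) :
    ∀ M : ℝ, 0 < M →
      Tendsto
        (fun t : ℝ =>
          (∑ x ∈ Finset.Icc (0 : ℤ) ⌊M * Real.sqrt t⌋,
              g x * F (-(x : ℝ) / Real.sqrt t)) / Real.sqrt t)
        atTop (nhds (∫ s in (0 : ℝ)..M, F (-s))) :=
  weighted_riemann_sum_limit_general g hgmean F hFmono hF01
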